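/- If φ, φ' ∈ PPU⁺(A) satisfy φ·H[[t⁻¹]] = φ'·H[[t⁻¹]], then φ = φ'. That is, the map Ω⁺ : PPU⁺(A) → {closed subspaces of H[[t,t⁻¹]]}, φ ↦ φ·H[[t⁻¹]], is injective. -/

import Mathlib

noncomputable section

/-- Finite Laurent polynomials `A[t,t⁻¹]` with coefficients among the bounded operators
on `H`, with convolution product. -/
abbrev LaurentOp (H : Type*) [NormedAddCommGroup H] [InnerProductSpace ℂ H]
    [CompleteSpace H] : Type _ :=
  AddMonoidAlgebra (H →L[ℂ] H) ℤ

variable {H : Type*} [NormedAddCommGroup H] [InnerProductSpace ℂ H] [CompleteSpace H]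

/-- The involution `φ* = Σ tⁱ (φ₋ᵢ)*` on `B(H)[t,t⁻¹]` (with `*` the adjoint). -/
def lstar (φ : LaurentOp H) : LaurentOp H :=
  AddMonoidAlgebra.ofCoeff <| Finsupp.equivMapDomain (Equiv.neg ℤ) (Finsupp.mapRange star (star_zero _) φ.coeff)

/-- The specialization `ε₁(φ) = Σᵢ φᵢ`. -/
def eps1 (φ : LaurentOp H) : H →L[ℂ] H := φ.coeff.sum fun _ a => a

/-- Membership in `PPU(A)`: all coefficients of `φ` lie in the von Neumann algebra `A`,
`φ` is paraunitary (`φ*φ = φφ* = 1`), and `ε₁(φ) = 1`. -/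
def InPPU (A : VonNeumannAlgebra H) (φ : LaurentOp H) : Prop :=
  (∀ i, φ.coeff i ∈ A) ∧ lstar φ * φ = 1 ∧ φ * lstar φ = 1 ∧ eps1 φ = 1

/-- Membership in `PPU⁺(A) = PPU(A) ∩ A[t]`. -/
def InPPUplus (A : VonNeumannAlgebra H) (φ : LaurentOp H) : Prop :=
  InPPU A φ ∧ ∀ i < (0 : ℤ), φ.coeff i = 0

/-- The action of a Laurent polynomial on a two-sided sequence:
`(φx)ᵢ = Σ_k φ_k (x_{i−k})`. -/
def act (φ : LaurentOp H) (x : ℤ → H) : ℤ → H :=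
  fun i => ∑ k ∈ φ.coeff.support, φ.coeff k (x (i - k))

/-- `tⁿH[[t⁻¹]]`: the square-summable sequences (i.e. elements of
`H[[t,t⁻¹]] = ℓ²(ℤ,H)`) vanishing in all degrees `> n`. -/
def Hmn (H : Type*) [NormedAddCommGroup H] [InnerProductSpace ℂ H] [CompleteSpace H]
    (n : ℤ) : Set (ℤ → H) :=
  {x | Memℓp x 2 ∧ ∀ i > n, x i = 0}

/-- `φ·H[[t⁻¹]]`, the image of `H[[t⁻¹]] = t⁰H[[t⁻¹]]` under the action of `φ`. -/
def actH (φ : LaurentOp H) : Set (ℤ → H) := act φ '' Hmn H 0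

/-- `S` is a closed linear subspace of `H[[t,t⁻¹]] = ℓ²(ℤ,H)` which is invariant under
the actions of the commutant `A'` (acting coefficientwise) and of `t⁻¹` (the shift). -/
def IsInvClosed (A : VonNeumannAlgebra H) (S : Set (ℤ → H)) : Prop :=
  (∀ x ∈ S, Memℓp x 2) ∧
  IsClosed {y : lp (fun _ : ℤ => H) 2 | (y : ℤ → H) ∈ S} ∧
  (0 ∈ S) ∧ (∀ x ∈ S, ∀ y ∈ S, x + y ∈ S) ∧ (∀ (c : ℂ), ∀ x ∈ S, c • x ∈ S) ∧
  (∀ x ∈ S, (fun i => x (i + 1)) ∈ S) ∧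
  (∀ ψ ∈ A.commutant, ∀ x ∈ S, (fun i => ψ (x i)) ∈ S)

/-- The orthogonal projection `π_M` onto a closed subspace `M`, as an operator on `H`. -/
def projL (M : Submodule ℂ H) (hM : IsClosed (M : Set H)) : H →L[ℂ] H :=
  haveI : CompleteSpace M := hM.completeSpace_coe
  M.subtypeL.comp M.orthogonalProjectionOnto

/-- The element `p_M = tπ_M + π_{Mᗮ}` of `A[t,t⁻¹]`. -/
def pEl (M : Submodule ℂ H) (hM : IsClosed (M : Set H)) : LaurentOp H :=
  AddMonoidAlgebra.single (1 : ℤ) (projL M hM) +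
    AddMonoidAlgebra.single (0 : ℤ) (projL Mᗮ M.isClosed_orthogonal)

/-- The element `t = t·1` of `A[t,t⁻¹]`. -/
def tEl (H : Type*) [NormedAddCommGroup H] [InnerProductSpace ℂ H] [CompleteSpace H] :
    LaurentOp H :=
  AddMonoidAlgebra.single (1 : ℤ) 1

/-- `M` is invariant under every element of the commutant `A'`. -/
def InvariantC (A : VonNeumannAlgebra H) (M : Submodule ℂ H) : Prop :=
  ∀ φ ∈ A.commutant, ∀ x ∈ M, φ x ∈ M


lemma lstar_apply (φ : LaurentOp H) (i : ℤ) : (lstar φ).coeff i = star (φ.coeff (-i)) := rfl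

lemma lstar_single (n : ℤ) (a : H →L[ℂ] H) :
    lstar (AddMonoidAlgebra.single n a : LaurentOp H) = AddMonoidAlgebra.single (-n) (star a) := by
  unfold lstar
  rw [AddMonoidAlgebra.coeff_single, Finsupp.mapRange_single, Finsupp.equivMapDomain_single,
    Equiv.neg_apply, AddMonoidAlgebra.ofCoeff_single]

lemma lstar_add (φ ψ : LaurentOp H) : lstar (φ + ψ) = lstar φ + lstar ψ :=
  AddMonoidAlgebra.ext <| Finsupp.ext fun i => by
    simp only [lstar_apply, AddMonoidAlgebra.coeff_add, Finsupp.add_apply, star_add]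

lemma lstar_zero : lstar (0 : LaurentOp H) = 0 :=
  AddMonoidAlgebra.ext <| Finsupp.ext fun i => by simp [lstar_apply]

lemma lstar_lstar (φ : LaurentOp H) : lstar (lstar φ) = φ :=
  AddMonoidAlgebra.ext <| Finsupp.ext fun i => by rw [lstar_apply, lstar_apply, neg_neg, star_star]

lemma lstar_mul (φ ψ : LaurentOp H) : lstar (φ * ψ) = lstar ψ * lstar φ := by
  induction φ using AddMonoidAlgebra.induction_linear with
  | zero => simp [lstar_zero]
  | add f g hf hg => rw [add_mul, lstar_add, hf, hg, lstar_add, mul_add]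
  | single n a =>
    induction ψ using AddMonoidAlgebra.induction_linear with
    | zero => simp [lstar_zero]
    | add f g hf hg => rw [mul_add, lstar_add, hf, hg, lstar_add, add_mul]
    | single m b =>
      rw [AddMonoidAlgebra.single_mul_single, lstar_single, lstar_single, lstar_single,
        star_mul, neg_add_rev, AddMonoidAlgebra.single_mul_single]

lemma eps1_add (φ ψ : LaurentOp H) : eps1 (φ + ψ) = eps1 φ + eps1 ψ := by
  unfold eps1
  rw [AddMonoidAlgebra.coeff_add]
  exact Finsupp.sum_add_index' (fun _ => rfl) (fun _ _ _ => rfl)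

lemma eps1_single (n : ℤ) (a : H →L[ℂ] H) :
    eps1 (AddMonoidAlgebra.single n a : LaurentOp H) = a := by
  unfold eps1; rw [AddMonoidAlgebra.coeff_single]; exact Finsupp.sum_single_index rfl

lemma eps1_zero : eps1 (0 : LaurentOp H) = 0 :=
  Finsupp.sum_zero_index

lemma eps1_mul (φ ψ : LaurentOp H) : eps1 (φ * ψ) = eps1 φ * eps1 ψ := by
  induction φ using AddMonoidAlgebra.induction_linear with
  | zero => simp [eps1_zero]
  | add f g hf hg => rw [add_mul, eps1_add, hf, hg, eps1_add, add_mul]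
  | single n a =>
    induction ψ using AddMonoidAlgebra.induction_linear with
    | zero => simp [eps1_zero]
    | add f g hf hg => rw [mul_add, eps1_add, hf, hg, eps1_add, mul_add]
    | single m b =>
      rw [AddMonoidAlgebra.single_mul_single, eps1_single, eps1_single, eps1_single]

lemma eps1_lstar (φ : LaurentOp H) : eps1 (lstar φ) = star (eps1 φ) := by
  induction φ using AddMonoidAlgebra.induction_linear with
  | zero => simp [lstar_zero, eps1_zero]
  | add f g hf hg => rw [lstar_add, eps1_add, hf, hg, eps1_add, star_add]
  | single n a => rw [lstar_single, eps1_single, eps1_single]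

lemma act_eq_sum (φ : LaurentOp H) (x : ℤ → H) {s : Finset ℤ} (hs : φ.coeff.support ⊆ s) (i : ℤ) :
    act φ x i = ∑ k ∈ s, φ.coeff k (x (i - k)) :=
  Finset.sum_subset hs (fun k _ hk => by
    rw [Finsupp.notMem_support_iff.mp hk]; simp)

lemma act_zero (x : ℤ → H) : act (0 : LaurentOp H) x = 0 := by
  funext i; simp [act]

lemma act_add_left (φ ψ : LaurentOp H) (x : ℤ → H) :
    act (φ + ψ) x = act φ x + act ψ x := by
  funext i
  rw [Pi.add_apply,
    act_eq_sum (φ + ψ) x (s := φ.coeff.support ∪ ψ.coeff.support) Finsupp.support_add i,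
    act_eq_sum φ x (s := φ.coeff.support ∪ ψ.coeff.support) Finset.subset_union_left i,
    act_eq_sum ψ x (s := φ.coeff.support ∪ ψ.coeff.support) Finset.subset_union_right i,
    ← Finset.sum_add_distrib]
  refine Finset.sum_congr rfl fun k _ => ?_
  rw [AddMonoidAlgebra.coeff_add, Finsupp.add_apply, ContinuousLinearMap.add_apply]

lemma act_single (n : ℤ) (a : H →L[ℂ] H) (x : ℤ → H) (i : ℤ) :
    act (AddMonoidAlgebra.single n a : LaurentOp H) x i = a (x (i - n)) := by
  rw [act_eq_sum (AddMonoidAlgebra.single n a) x (s := {n}) Finsupp.support_single_subset, Finset.sum_singleton,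
    AddMonoidAlgebra.coeff_single, Finsupp.single_eq_same]

lemma act_mul (φ ψ : LaurentOp H) (x : ℤ → H) :
    act (φ * ψ) x = act φ (act ψ x) := by
  induction φ using AddMonoidAlgebra.induction_linear with
  | zero => rw [zero_mul, act_zero, act_zero]
  | add f g hf hg => rw [add_mul, act_add_left, hf, hg, act_add_left]
  | single n a =>
    induction ψ using AddMonoidAlgebra.induction_linear with
    | zero =>
      rw [mul_zero, act_zero]
      funext i; rw [act_single]; simp
    | add f g hf hg =>
      rw [mul_add, act_add_left, hf, hg, act_add_left]
      funext i
      simp only [Pi.add_apply, act_single, map_add]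
    | single m b =>
      funext i
      rw [AddMonoidAlgebra.single_mul_single, act_single, act_single, act_single,
        ContinuousLinearMap.mul_apply, show i - (n + m) = i - n - m from by omega]

lemma act_one (x : ℤ → H) : act (1 : LaurentOp H) x = x := by
  funext i
  have h1 : (1 : LaurentOp H) = AddMonoidAlgebra.single 0 1 := rfl
  rw [h1, act_single]
  simp

/-- The delta sequence concentrated in degree `0`. -/
def delta (v : H) : ℤ → H := fun i => if i = 0 then v else 0

lemma delta_mem (v : H) : delta v ∈ Hmn H 0 := by
  constructor
  · apply memℓp_gen
    apply summable_of_ne_finset_zero (s := ({0} : Finset ℤ))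
    intro i hi
    simp only [Finset.mem_singleton] at hi
    simp [delta, hi]
  · intro i hi
    exact if_neg (by omega)

lemma act_delta (ψ : LaurentOp H) (v : H) (i : ℤ) : act ψ (delta v) i = ψ.coeff i v := by
  rw [act_eq_sum ψ (delta v) (s := ψ.coeff.support ∪ {i}) Finset.subset_union_left i,
    Finset.sum_eq_single i]
  · simp [delta]
  · intro k _ hk
    have hik : i - k ≠ 0 := by omega
    simp [delta, hik]
  · intro hni
    exact absurd (Finset.mem_union_right _ (Finset.mem_singleton_self i)) hni

lemma coeff_zero_of_maps (ψ : LaurentOp H)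
    (hmap : ∀ x ∈ Hmn H 0, act ψ x ∈ Hmn H 0) {i : ℤ} (hi : 0 < i) : ψ.coeff i = 0 := by
  ext v
  have h0 := (hmap _ (delta_mem v)).2 i hi
  rw [act_delta] at h0
  simpa using h0

lemma maps_of_actH_sub (φ φ' : LaurentOp H) (hφ'1 : lstar φ' * φ' = 1)
    (h : actH φ ⊆ actH φ') :
    ∀ x ∈ Hmn H 0, act (lstar φ' * φ) x ∈ Hmn H 0 := by
  intro x hx
  obtain ⟨y, hy, hxy⟩ := h ⟨x, hx, rfl⟩
  rw [act_mul, ← hxy, ← act_mul, hφ'1, act_one]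
  exact hy

/--
Let `A` be a von Neumann algebra on `H`.  If `φ, φ' ∈ PPU⁺(A)` satisfy
`φ·H[[t⁻¹]] = φ'·H[[t⁻¹]]`, then `φ = φ'`; that is, the map
`Ω⁺ : φ ↦ φ·H[[t⁻¹]]` is injective on `PPU⁺(A)`.
-/
theorem stmt10 (A : VonNeumannAlgebra H) (φ φ' : LaurentOp H)
    (hφ : InPPUplus A φ) (hφ' : InPPUplus A φ')
    (h : actH φ = actH φ') :
    φ = φ' := by
  -- `ψ = (φ')* φ` maps `H[[t⁻¹]]` into itself, as does `ψ* = φ* φ'`.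
  set ψ : LaurentOp H := lstar φ' * φ with hψdef
  have hmap1 : ∀ x ∈ Hmn H 0, act ψ x ∈ Hmn H 0 :=
    maps_of_actH_sub φ φ' hφ'.1.2.1 h.le
  have hmap2 : ∀ x ∈ Hmn H 0, act (lstar φ * φ') x ∈ Hmn H 0 :=
    maps_of_actH_sub φ' φ hφ.1.2.1 h.ge
  have hls : lstar ψ = lstar φ * φ' := by
    rw [hψdef, lstar_mul, lstar_lstar]
  -- positive coefficients of `ψ` vanish
  have hpos : ∀ i : ℤ, 0 < i → ψ.coeff i = 0 := fun i hi => coeff_zero_of_maps ψ hmap1 hi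
  -- negative coefficients of `ψ` vanish
  have hneg : ∀ i : ℤ, i < 0 → ψ.coeff i = 0 := by
    intro i hi
    have h1 : (lstar ψ).coeff (-i) = 0 := by
      rw [hls]; exact coeff_zero_of_maps _ hmap2 (by omega)
    rw [lstar_apply, neg_neg] at h1
    exact star_eq_zero.mp h1
  -- hence `ψ` is concentrated in degree `0`
  have hsingle : ψ = AddMonoidAlgebra.single 0 (ψ.coeff 0) := by
    ext i
    rcases lt_trichotomy i 0 with hi | rfl | hi
    · rw [hneg i hi, AddMonoidAlgebra.coeff_single, Finsupp.single_eq_of_ne (by omega)]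
    · rw [AddMonoidAlgebra.coeff_single, Finsupp.single_eq_same]
    · rw [hpos i hi, AddMonoidAlgebra.coeff_single, Finsupp.single_eq_of_ne (by omega)]
  -- and `ε₁(ψ) = 1` forces `ψ = 1`
  have heps : eps1 ψ = 1 := by
    rw [hψdef, eps1_mul, eps1_lstar, hφ'.1.2.2.2, hφ.1.2.2.2, star_one, one_mul]
  have hψ0 : ψ.coeff 0 = 1 := by
    rw [hsingle, eps1_single] at heps
    exact heps
  have hψ1 : ψ = 1 := by
    rw [hsingle, hψ0]; rfl
  -- conclude
  have : φ' * ψ = φ' * 1 := by rw [hψ1]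
  rw [hψdef, ← mul_assoc, hφ'.1.2.2.1, one_mul, mul_one] at this
  exact this
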